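/- For every permutation π of {0,…,n} fixing 0 and n, the transposition distance satisfies d_t(π) ≥ d_b(π)/3. -/

import Mathlib

/- ----------------------------------------------------------------------
  Common definitions for the formalization of
  "Sorting by Transpositions is Difficult" (Bulteau, Fertin, Rusu).

  Permutations of {0,…,n} are represented as functions ℕ → ℕ that are
  bijections of the set {0,…,n} (everything above n is irrelevant /
  fixed).
---------------------------------------------------------------------- -/

set_option autoImplicit false

/-- The transposition `τ_{i,j,k}`, as a function on `ℕ`
(for `0 < i < j < k ≤ n` it is a permutation of `{0,…,n}`,
fixing everything `≥ k`). Here `q = k + i - j`. -/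
def tau (i j k x : ℕ) : ℕ :=
  if x < i then x
  else if x < k + i - j then x + j - i
  else if x < k then x + j - k
  else x

/-- The inverse transposition `τ_{i,j,k}⁻¹ = τ_{i,k+i-j,k}`. -/
def tauInv (i j k x : ℕ) : ℕ := tau i (k + i - j) k x

def min3 (p q r : ℕ) : ℕ := min p (min q r)

def max3 (p q r : ℕ) : ℕ := max p (max q r)

/-- the middle value of three (pairwise distinct) values -/
def mid3 (p q r : ℕ) : ℕ := p + q + r - min3 p q r - max3 p q r

/-- The triple of positions `(p,q,r)` is *well-ordered*:
one of `p<q<r`, `q<r<p`, `r<p<q` holds. -/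
def WellOrdered3 (p q r : ℕ) : Prop :=
  (p < q ∧ q < r) ∨ (q < r ∧ r < p) ∨ (r < p ∧ p < q)

/-- The transposition `τ[a,b,c,ψ]` associated with a (well-ordered) triple
whose `ψ`-positions are `(p,q,r)`: it is `τ_{i,j,k}` for `(i,j,k)` the
sorted sequence of `(p,q,r)`. -/
def tauStep (p q r x : ℕ) : ℕ := tau (min3 p q r) (mid3 p q r) (max3 p q r) x

/-- the inverse of `τ[a,b,c,ψ]` -/
def tauInvStep (p q r x : ℕ) : ℕ := tauInv (min3 p q r) (mid3 p q r) (max3 p q r) x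

/-- the number of breakpoints `d_b(π)` of `π` as a permutation of `{0,…,n}`:
the number of `x ∈ {1,…,n}` such that `(x-1,x)` is not an adjacency,
i.e. `π x ≠ π (x-1) + 1`. -/
def db (n : ℕ) (π : ℕ → ℕ) : ℕ :=
  ((Finset.Icc 1 n).filter fun x => π x ≠ π (x - 1) + 1).card

/-- a triple `(i,j,k)` of integers coding a transposition of `{0,…,n}` -/
def IsTransp (n : ℕ) (t : ℕ × ℕ × ℕ) : Prop :=
  0 < t.1 ∧ t.1 < t.2.1 ∧ t.2.1 < t.2.2 ∧ t.2.2 ≤ n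

/-- `π` can be sorted by `m` transpositions:
there are transpositions `τ_1,…,τ_m` with `π ∘ τ_m ∘ ⋯ ∘ τ_1 = Id` on `{0,…,n}`.
(`d_t(π)` is the least such `m`.) -/
def SortsIn (n : ℕ) (π : ℕ → ℕ) (m : ℕ) : Prop :=
  ∃ L : List (ℕ × ℕ × ℕ), L.length = m ∧ (∀ t ∈ L, IsTransp n t) ∧
    ∀ x ≤ n, π (L.foldl (fun y t => tau t.1 t.2.1 t.2.2 y) x) = x

/-- the three elements of an ordered triple, as a finite set -/
def trElems {α : Type*} [DecidableEq α] (t : α × α × α) : Finset α := {t.1, t.2.1, t.2.2}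

/-- A 3DT-instance `I = ⟨Σ, T, ψ⟩` of span `n`: an alphabet `Sig`,
a set `T` of ordered triples partitioning `Sig`, and an injection
`ψ : Sig → {1,…,n}`. -/
structure TDT (α : Type*) [DecidableEq α] (n : ℕ) where
  Sig : Finset α
  T : Finset (α × α × α)
  psi : α → ℕ
  mem_T : ∀ t ∈ T, t.1 ∈ Sig ∧ t.2.1 ∈ Sig ∧ t.2.2 ∈ Sig
  cover : ∀ σ ∈ Sig, ∃ t ∈ T, σ ∈ trElems t
  nodup_T : ∀ t ∈ T, t.1 ≠ t.2.1 ∧ t.1 ≠ t.2.2 ∧ t.2.1 ≠ t.2.2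
  disj_T : ∀ t ∈ T, ∀ t' ∈ T, t ≠ t' → Disjoint (trElems t) (trElems t')
  psi_mem : ∀ σ ∈ Sig, psi σ ∈ Finset.Icc 1 n
  psi_inj : Set.InjOn psi ↑Sig

namespace TDT

variable {α : Type*} [DecidableEq α] {n : ℕ}

/-- the domain `L = ψ(Σ)` of a 3DT-instance -/
def dom (I : TDT α n) : Finset ℕ := I.Sig.image I.psi

/-- a triple of `T` is well-ordered -/
def WellOrderedT (I : TDT α n) (t : α × α × α) : Prop :=
  WellOrdered3 (I.psi t.1) (I.psi t.2.1) (I.psi t.2.2)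

/-- the transposition `τ[a,b,c,ψ]` associated with a well-ordered triple -/
def tauOf (I : TDT α n) (t : α × α × α) (x : ℕ) : ℕ :=
  tauStep (I.psi t.1) (I.psi t.2.1) (I.psi t.2.2) x

/-- the inverse of `τ[a,b,c,ψ]` -/
def tauOfInv (I : TDT α n) (t : α × α × α) (x : ℕ) : ℕ :=
  tauInvStep (I.psi t.1) (I.psi t.2.1) (I.psi t.2.2) x

end TDT

/-- a *variable*: a pair of triples `[(a,b,c),(x,y,z)]` -/
abbrev Var (α : Type*) : Type _ := (α × α × α) × (α × α × α)

section Main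

variable {α : Type*} [DecidableEq α]

/-- The 3DT-step `I →(a,b,c) I'` (only defined when `(a,b,c)` is a
well-ordered triple of `T`): the triple is removed and `ψ` is composed
with `τ[a,b,c,ψ]⁻¹`. -/
def StepT {n : ℕ} (t : α × α × α) (I I' : TDT α n) : Prop :=
  t ∈ I.T ∧ I.WellOrderedT t ∧
  I'.Sig = I.Sig \ trElems t ∧
  I'.T = I.T.erase t ∧
  ∀ σ ∈ I'.Sig, I'.psi σ = I.tauOfInv t (I.psi σ)

/-- `I` is 3DT-collapsible: some sequence of 3DT-steps reduces it to the
empty instance. -/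
def Collapsible {n : ℕ} (I : TDT α n) : Prop :=
  ∃ J : TDT α n,
    Relation.ReflTransGen (fun X Y => ∃ t, StepT t X Y) I J ∧ J.Sig = ∅ ∧ J.T = ∅

/-- `I ∼ π` : the 3DT-instance `I` (of span `n`) and the permutation `π` of
`{0,…,n}` are equivalent: `π 0 = 0`, `π v = π (v-1) + 1` for `v ∉ L`, and
`π v = π (succ_I⁻¹ v - 1) + 1` for `v ∈ L` (expressed triple by triple). -/
def EquivPerm {n : ℕ} (I : TDT α n) (π : ℕ → ℕ) : Prop :=
  π 0 = 0 ∧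
  (∀ v, 1 ≤ v → v ≤ n → v ∉ I.dom → π v = π (v - 1) + 1) ∧
  ∀ t ∈ I.T,
    π (I.psi t.2.1) = π (I.psi t.1 - 1) + 1 ∧
    π (I.psi t.2.2) = π (I.psi t.2.1 - 1) + 1 ∧
    π (I.psi t.1) = π (I.psi t.2.2 - 1) + 1

/-- `(s 1, …, s l)` is an `l`-block-decomposition of span `n` -/
def IsBlockDec (n l : ℕ) (s : ℕ → ℕ) : Prop :=
  s 1 = 0 ∧ (∀ h, 1 ≤ h → h < l → s h < s (h + 1)) ∧ s l < n

/-- `t_h`: the right end of block `h` (`t_h = s_{h+1}` for `h < l`, `t_l = n`) -/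
def tEnd (n l : ℕ) (s : ℕ → ℕ) (h : ℕ) : ℕ := if h = l then n else s (h + 1)

/-- position `p` lies in block `h`, i.e. `p ∈ {s_h + 1, …, t_h}` -/
def InBlock (n l : ℕ) (s : ℕ → ℕ) (h p : ℕ) : Prop := s h < p ∧ p ≤ tEnd n l s h

/-- a triple of `T` is *internal* (all three elements in one block) -/
def InternalT (n l : ℕ) (I : TDT α n) (s : ℕ → ℕ) (t : α × α × α) : Prop :=
  ∃ h, 1 ≤ h ∧ h ≤ l ∧ InBlock n l s h (I.psi t.1) ∧ InBlock n l s h (I.psi t.2.1) ∧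
    InBlock n l s h (I.psi t.2.2)

/-- block conditions (C2)–(C3) of a variable `[(a,b,c),(x,y,z)]`:
`b,x,y` lie in the source block `h0` and `a,c,z` lie in the target block
`h1 ≠ h0`. -/
def VarBlocksAt (n l : ℕ) (I : TDT α n) (s : ℕ → ℕ) (h0 h1 : ℕ) (a b c x y z : α) : Prop :=
  (a, b, c) ∈ I.T ∧ (x, y, z) ∈ I.T ∧
  1 ≤ h0 ∧ h0 ≤ l ∧ 1 ≤ h1 ∧ h1 ≤ l ∧ h1 ≠ h0 ∧
  InBlock n l s h0 (I.psi b) ∧ InBlock n l s h0 (I.psi x) ∧ InBlock n l s h0 (I.psi y) ∧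
  InBlock n l s h1 (I.psi a) ∧ InBlock n l s h1 (I.psi c) ∧ InBlock n l s h1 (I.psi z)

/-- the variable `[(a,b,c),(x,y,z)]` is *valid*, with source `h0` and target `h1`:
conditions (C2)–(C5). -/
def ValidVarAt (n l : ℕ) (I : TDT α n) (s : ℕ → ℕ) (h0 h1 : ℕ) (a b c x y z : α) : Prop :=
  VarBlocksAt n l I s h0 h1 a b c x y z ∧
  (I.psi x < I.psi y →
    I.psi x < I.psi b ∧ I.psi b < I.psi y ∧
      ∀ σ ∈ I.Sig, I.psi x < I.psi σ → I.psi σ < I.psi y → σ = b) ∧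
  I.psi a < I.psi z ∧ I.psi z < I.psi c

/-- the variable `[(a,b,c),(x,y,z)]` is valid in the block decomposition `s` -/
def ValidVar (n l : ℕ) (I : TDT α n) (s : ℕ → ℕ) (a b c x y z : α) : Prop :=
  ∃ h0 h1, ValidVarAt n l I s h0 h1 a b c x y z

/-- validity of a variable given as a pair of triples -/
def ValidVarV (n l : ℕ) (I : TDT α n) (s : ℕ → ℕ) (V : Var α) : Prop :=
  ValidVar n l I s V.1.1 V.1.2.1 V.1.2.2 V.2.1 V.2.2.1 V.2.2.2

/-- conditions (C2)–(C3) only, of a variable given as a pair of triples -/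
def VarC23V (n l : ℕ) (I : TDT α n) (s : ℕ → ℕ) (V : Var α) : Prop :=
  ∃ h0 h1, VarBlocksAt n l I s h0 h1 V.1.1 V.1.2.1 V.1.2.2 V.2.1 V.2.2.1 V.2.2.2

/-- the external triples of `(I,s)` are partitioned into the set `𝒜` of
variables, each satisfying the property `P`. -/
def PartitionIntoVars (n l : ℕ) (I : TDT α n) (s : ℕ → ℕ) (P : Var α → Prop)
    (𝒜 : Finset (Var α)) : Prop :=
  (∀ V ∈ 𝒜, P V) ∧
  (∀ V ∈ 𝒜, V.1 ≠ V.2) ∧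
  (∀ V ∈ 𝒜, ∀ W ∈ 𝒜, V ≠ W → V.1 ≠ W.1 ∧ V.1 ≠ W.2 ∧ V.2 ≠ W.1 ∧ V.2 ≠ W.2) ∧
  (∀ V ∈ 𝒜, ¬ InternalT n l I s V.1 ∧ ¬ InternalT n l I s V.2) ∧
  ∀ t ∈ I.T, ¬ InternalT n l I s t → ∃ V ∈ 𝒜, t = V.1 ∨ t = V.2

/-- `(I,s)` is a *valid context* -/
def ValidContext (n l : ℕ) (I : TDT α n) (s : ℕ → ℕ) : Prop :=
  IsBlockDec n l s ∧ ∃ 𝒜, PartitionIntoVars n l I s (ValidVarV n l I s) 𝒜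

/-- a 3DT-step on an instance together with an `l`-block-decomposition:
`(I,B) →(t) (I',B')` with `B' = τ⁻¹[B]`. -/
def StepB (n l : ℕ) (t : α × α × α) (P P' : TDT α n × (ℕ → ℕ)) : Prop :=
  StepT t P.1 P'.1 ∧ IsBlockDec n l P'.2 ∧
  ∀ h, 1 ≤ h → h ≤ l → P'.2 h = P.1.tauOfInv t (P.2 h)

/-- From the state `st`, the triple `v` (of some variable) can be activated,
possibly after some 3DT-steps using only the internal triples in `ints`. -/
def CanActivate (n l : ℕ) (ints : Set (α × α × α)) (v : α × α × α)
    (st : TDT α n × (ℕ → ℕ)) : Prop :=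
  ∃ (m : ℕ) (c : ℕ → TDT α n × (ℕ → ℕ)) (tr : ℕ → α × α × α),
    c 0 = st ∧ (∀ p ≤ m, StepB n l (tr p) (c p) (c (p + 1))) ∧
    (∀ p < m, tr p ∈ ints) ∧ tr m = v

/-- the block `h` of `(I,s)` reads (in increasing `ψ`-order) exactly as the
word `w`. -/
def BlockWord (n l : ℕ) (I : TDT α n) (s : ℕ → ℕ) (h : ℕ) (w : List α) : Prop :=
  w.Chain' (fun u v => I.psi u < I.psi v) ∧
  (∀ σ ∈ w, σ ∈ I.Sig ∧ InBlock n l s h (I.psi σ)) ∧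
  ∀ σ ∈ I.Sig, InBlock n l s h (I.psi σ) → σ ∈ w

/-- the block `h` is the block `[A1,A2] = copy(A)`,
with word `a y1 e z d y2 x1 b1 c x2 b2 f`. -/
def IsCopyBlock (n l : ℕ) (I : TDT α n) (s : ℕ → ℕ) (h : ℕ) (A A1 A2 : Var α)
    (d e f : α) : Prop :=
  (d, e, f) ∈ I.T ∧
  BlockWord n l I s h
    [A.1.1, A1.2.2.1, e, A.2.2.2, d, A2.2.2.1, A1.2.1, A1.1.2.1, A.1.2.2, A2.2.1, A2.1.2.1, f]

/-- the block `h` is the block `A = and(A1,A2)`,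
with word `a1 e z1 a2 c1 z2 d y c2 x b f`. -/
def IsAndBlock (n l : ℕ) (I : TDT α n) (s : ℕ → ℕ) (h : ℕ) (A1 A2 A : Var α)
    (d e f : α) : Prop :=
  (d, e, f) ∈ I.T ∧
  BlockWord n l I s h
    [A1.1.1, e, A1.2.2.2, A2.1.1, A1.1.2.2, A2.2.2.2, d, A.2.2.1, A2.1.2.2, A.2.1, A.1.2.1, f]

/-- the block `h` is the block `A = or(A1,A2)`,
with word `a1 b' z1 a2 d y a' x b f z2 c1 e c' c2`. -/
def IsOrBlock (n l : ℕ) (I : TDT α n) (s : ℕ → ℕ) (h : ℕ) (A1 A2 A : Var α)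
    (a' b' c' d e f : α) : Prop :=
  (a', b', c') ∈ I.T ∧ (d, e, f) ∈ I.T ∧
  BlockWord n l I s h
    [A1.1.1, b', A1.2.2.2, A2.1.1, d, A.2.2.1, a', A.2.1, A.1.2.1, f, A2.2.2.2, A1.1.2.2, e,
      c', A2.1.2.2]

/-- the block `h` is the block `[A1,A2] = var(A)`,
with word `d1 y1 a d2 y2 e1 a' e2 x1 b1 f1 c' z b' c x2 b2 f2`. -/
def IsVarBlock (n l : ℕ) (I : TDT α n) (s : ℕ → ℕ) (h : ℕ) (A A1 A2 : Var α)
    (d1 e1 f1 d2 e2 f2 a' b' c' : α) : Prop :=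
  (d1, e1, f1) ∈ I.T ∧ (d2, e2, f2) ∈ I.T ∧ (a', b', c') ∈ I.T ∧
  BlockWord n l I s h
    [d1, A1.2.2.1, A.1.1, d2, A2.2.2.1, e1, a', e2, A1.2.1, A1.1.2.1, f1, c', A.2.2.2, b',
      A.1.2.2, A2.2.1, A2.1.2.1, f2]

/-- `(I,s)` is an *assembling of basic blocks* over the set `𝒜` of variables:
the word representation of `I` is a concatenation of `l` blocks, each of one
of the four kinds `copy`, `and`, `or`, `var`; each variable is the input of
exactly one block and the output of exactly one other block, and `T`
consists of the internal triples of the blocks together with the triples of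
the variables. -/
def IsAssembling (n l : ℕ) (I : TDT α n) (s : ℕ → ℕ) (𝒜 : Finset (Var α)) : Prop :=
  IsBlockDec n l s ∧
  (∀ V ∈ 𝒜, V.1 ∈ I.T ∧ V.2 ∈ I.T ∧ V.1 ≠ V.2) ∧
  (∀ V ∈ 𝒜, ∀ W ∈ 𝒜, V ≠ W → V.1 ≠ W.1 ∧ V.1 ≠ W.2 ∧ V.2 ≠ W.1 ∧ V.2 ≠ W.2) ∧
  (∀ V ∈ 𝒜, ∃ h0 h1, VarBlocksAt n l I s h0 h1 V.1.1 V.1.2.1 V.1.2.2 V.2.1 V.2.2.1 V.2.2.2) ∧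
  (∀ t ∈ I.T, InternalT n l I s t ∨ ∃ V ∈ 𝒜, t = V.1 ∨ t = V.2) ∧
  ∀ h, 1 ≤ h → h ≤ l →
    (∃ A ∈ 𝒜, ∃ A1 ∈ 𝒜, ∃ A2 ∈ 𝒜, ∃ d e f : α, IsCopyBlock n l I s h A A1 A2 d e f) ∨
    (∃ A ∈ 𝒜, ∃ A1 ∈ 𝒜, ∃ A2 ∈ 𝒜, ∃ d e f : α, IsAndBlock n l I s h A1 A2 A d e f) ∨
    (∃ A ∈ 𝒜, ∃ A1 ∈ 𝒜, ∃ A2 ∈ 𝒜, ∃ a' b' c' d e f : α,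
      IsOrBlock n l I s h A1 A2 A a' b' c' d e f) ∨
    (∃ A ∈ 𝒜, ∃ A1 ∈ 𝒜, ∃ A2 ∈ 𝒜, ∃ d1 e1 f1 d2 e2 f2 a' b' c' : α,
      IsVarBlock n l I s h A A1 A2 d1 e1 f1 d2 e2 f2 a' b' c')

end Main

/-- satisfiability of a boolean formula in CNF (clauses are lists of
literals; a literal is a pair (variable index, sign)) -/
def CNFSat (m : ℕ) (φ : List (List (Fin m × Bool))) : Prop :=
  ∃ v : Fin m → Bool, ∀ C ∈ φ, ∃ p ∈ C, v p.1 = p.2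

/-! A transposition `τ = τ_{i,j,k}` cuts the sequence only at `i`, `j` and `k`: for any other
`x`, `τ⁻¹` sends the pair `(x - 1, x)` to a pair of consecutive positions, so each breakpoint of
`π` outside `{i, j, k}` is carried injectively to a breakpoint of `π ∘ τ`. Hence
`d_b(π) ≤ d_b(π ∘ τ) + 3`, and `d_b(Id) = 0` gives `d_b(π) ≤ 3 m` along any sorting sequence. -/

section Transposition

variable {i j k : ℕ}

lemma tau_tauInv (hij : i < j) (hjk : j < k) (x : ℕ) : tau i j k (tauInv i j k x) = x := by
  simp only [tau, tauInv]
  split_ifs <;> omega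

lemma tauInv_sub_one (hij : i < j) (hjk : j < k) {x : ℕ} (hx : x ∉ ({i, j, k} : Finset ℕ)) :
    tauInv i j k (x - 1) = tauInv i j k x - 1 := by
  simp only [Finset.mem_insert, Finset.mem_singleton, not_or] at hx
  simp only [tau, tauInv]
  split_ifs <;> omega

lemma tauInv_mem_Icc {n x : ℕ} (hi : 0 < i) (hij : i < j) (hjk : j < k) (hk : k ≤ n)
    (hx : x ∈ Finset.Icc 1 n) : tauInv i j k x ∈ Finset.Icc 1 n := by
  rw [Finset.mem_Icc] at hx ⊢
  simp only [tau, tauInv]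
  split_ifs <;> omega

end Transposition

def breakpoints (n : ℕ) (π : ℕ → ℕ) : Finset ℕ :=
  (Finset.Icc 1 n).filter fun x => π x ≠ π (x - 1) + 1

section Breakpoints

variable {n : ℕ}

lemma db_eq_zero_of_eqOn_id {π : ℕ → ℕ} (hπ : ∀ x ≤ n, π x = x) : db n π = 0 := by
  refine Finset.card_eq_zero.2 (Finset.filter_eq_empty_iff.2 fun x hx => ?_)
  rw [Finset.mem_Icc] at hx
  rw [hπ x hx.2, hπ (x - 1) (by omega)]
  omega

lemma db_le_db_comp_tau_add_three {t : ℕ × ℕ × ℕ} (ht : IsTransp n t) (π : ℕ → ℕ) :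
    db n π ≤ db n (fun x => π (tau t.1 t.2.1 t.2.2 x)) + 3 := by
  obtain ⟨i, j, k⟩ := t
  obtain ⟨hi, hij, hjk, hk⟩ := ht
  have hmaps : Set.MapsTo (tauInv i j k) ↑(breakpoints n π \ {i, j, k})
      ↑(breakpoints n fun x => π (tau i j k x)) := by
    intro x hx
    simp only [Finset.coe_sdiff, Set.mem_sdiff, Finset.mem_coe, breakpoints,
      Finset.mem_filter] at hx ⊢
    obtain ⟨⟨hxI, hbp⟩, hxijk⟩ := hx
    refine ⟨tauInv_mem_Icc hi hij hjk hk hxI, ?_⟩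
    rwa [← tauInv_sub_one hij hjk hxijk, tau_tauInv hij hjk, tau_tauInv hij hjk]
  calc db n π
      ≤ (breakpoints n π \ {i, j, k}).card + ({i, j, k} : Finset ℕ).card :=
        Finset.card_le_card_sdiff_add_card
    _ ≤ db n (fun x => π (tau i j k x)) + 3 :=
        add_le_add (Finset.card_le_card_of_injOn _ hmaps
          (Function.LeftInverse.injective (tau_tauInv hij hjk)).injOn) Finset.card_le_three

lemma db_le_three_mul_length (L : List (ℕ × ℕ × ℕ)) :
    ∀ π : ℕ → ℕ, (∀ t ∈ L, IsTransp n t) →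
      (∀ x ≤ n, π (L.foldl (fun y t => tau t.1 t.2.1 t.2.2 y) x) = x) →
      db n π ≤ 3 * L.length := by
  induction L using List.reverseRecOn with
  | nil =>
    intro π _ hπ
    simpa using db_eq_zero_of_eqOn_id (by simpa using hπ)
  | append_singleton L t ih =>
    intro π hL hπ
    have hdb_comp := ih (fun x => π (tau t.1 t.2.1 t.2.2 x))
      (fun s hs => hL s (List.mem_append_left _ hs)) (by simpa [List.foldl_append] using hπ)
    have hdb_step := db_le_db_comp_tau_add_three (hL t (by simp)) π
    rw [List.length_append, List.length_singleton]
    omega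

end Breakpoints

theorem stmt3_general (n : ℕ) (π : ℕ → ℕ) :
    ∀ m, SortsIn n π m → db n π ≤ 3 * m := by
  rintro m ⟨L, rfl, hL, hsort⟩
  exact db_le_three_mul_length L π hL hsort

/-- Property 5 of the paper.
For every permutation `π` of `{0,…,n}` fixing `0` and `n`, the transposition
distance satisfies `d_t(π) ≥ d_b(π)/3`; i.e. any sequence of `m`
transpositions sorting `π` satisfies `d_b(π) ≤ 3m`. -/
theorem stmt3 (n : ℕ) (π : ℕ → ℕ)
    (hbij : Set.BijOn π (Set.Icc 0 n) (Set.Icc 0 n))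
    (h0 : π 0 = 0) (hn : π n = n) :
    ∀ m, SortsIn n π m → db n π ≤ 3 * m :=
  stmt3_general n π
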